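/- For every integer k ≥ 2, the mobile general position number of the Cartesian product of two stars K_{1,k} satisfies mob(K_{1,k} □ K_{1,k}) = k + 1. -/

import Mathlib

open SimpleGraph

/-- `S` is a general position set of `G`: for all `u, v ∈ S`, every shortest `u,v`-path
contains no vertex of `S` other than `u` and `v`. -/
def IsGPSet {V : Type*} (G : SimpleGraph V) (S : Set V) : Prop :=
  ∀ u ∈ S, ∀ v ∈ S, ∀ p : G.Walk u v, p.IsPath → p.length = G.dist u v →
    ∀ w ∈ p.support, w ∈ S → w = u ∨ w = v

/-- A legal move from the configuration `S` to the configuration `T`: a robot at `u ∈ S`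
moves to an adjacent unoccupied vertex `v ∉ S` so that the resulting configuration
`(S \ {u}) ∪ {v}` is again a general position set. -/
def LegalMove {V : Type*} (G : SimpleGraph V) (S T : Set V) : Prop :=
  IsGPSet G S ∧ ∃ u ∈ S, ∃ v, v ∉ S ∧ G.Adj u v ∧
    T = insert v (S \ {u}) ∧ IsGPSet G T

/-- `S` is a mobile general position set: there is a finite sequence of configurations
`S = S_0, S_1, …, S_k`, each obtained from the previous one by a legal move, whose union
is the whole vertex set. -/
def IsMobileGPSet {V : Type*} (G : SimpleGraph V) (S : Set V) : Prop :=
  IsGPSet G S ∧ ∃ (k : ℕ) (f : ℕ → Set V), f 0 = S ∧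
    (∀ i < k, LegalMove G (f i) (f (i + 1))) ∧
    (⋃ i ∈ Set.Iic k, f i) = Set.univ

/-- The mobile general position number of `G`: the maximum cardinality of a mobile
general position set. -/
noncomputable def mob {V : Type*} (G : SimpleGraph V) : ℕ :=
  sSup {n | ∃ S : Set V, IsMobileGPSet G S ∧ S.ncard = n}

/-- The star `K_{1,k}`: centre `0` adjacent to the `k` leaves, and no other edges. -/
def starGraph (k : ℕ) : SimpleGraph (Fin (k + 1)) :=
  SimpleGraph.fromRel (fun x _ => x = 0)

/-!
Write `r` for the centre of the star. Distances in the product add over the two coordinates, so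
`w` lies on a geodesic from `u` to `v` exactly when each coordinate of `w` lies on the star path
between the corresponding coordinates of `u` and `v`. This turns general position into a finite
check.

Upper bound: a mobile set must at some moment occupy the centre `(r, r)`. In a general position
set containing the centre, any two other vertices share a coordinate (otherwise the centre is
between them), so they all lie on one copy of the star, and a general position set of `K_{1,k}`
has at most `k` vertices.

Lower bound: put one robot on a leaf `(r, j)` of the central row and one robot on each leaf
`(i, r)` of the central column. A robot can step from `(i, r)` to `(i, m)` and back whenever
`m ≠ j`; the robot on the central row passes from `(r, j)` to `(r, j')` by way of a configuration
with two robots on that row; finally all column robots sweep into one column `m`, after which the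
row robot can step into the centre.
-/

namespace SimpleGraph

variable {V W : Type*}

theorem dist_boxProd {G : SimpleGraph V} {H : SimpleGraph W} (hG : G.Connected) (hH : H.Connected)
    (x y : V × W) : (G □ H).dist x y = G.dist x.1 y.1 + H.dist x.2 y.2 := by
  have h := edist_boxProd (G := G) (H := H) x y
  rw [← ((hG.boxProd hH).preconnected x y).coe_dist_eq_edist,
    ← (hG.preconnected x.1 y.1).coe_dist_eq_edist, ← (hH.preconnected x.2 y.2).coe_dist_eq_edist]
    at h
  exact_mod_cast h

theorem dist_add_dist_boxProd_eq_iff {G : SimpleGraph V} {H : SimpleGraph W} (hG : G.Connected)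
    (hH : H.Connected) {u v w : V × W} :
    (G □ H).dist u w + (G □ H).dist w v = (G □ H).dist u v ↔
      G.dist u.1 w.1 + G.dist w.1 v.1 = G.dist u.1 v.1 ∧
        H.dist u.2 w.2 + H.dist w.2 v.2 = H.dist u.2 v.2 := by
  have h₁ : G.dist u.1 v.1 ≤ G.dist u.1 w.1 + G.dist w.1 v.1 := hG.dist_triangle
  have h₂ : H.dist u.2 v.2 ≤ H.dist u.2 w.2 + H.dist w.2 v.2 := hH.dist_triangle
  simp only [dist_boxProd hG hH]
  omega

theorem starGraph_dist [DecidableEq V] {r x y : V} :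
    (starGraph r).dist x y = if x = y then 0 else if x = r ∨ y = r then 1 else 2 := by
  split_ifs with hxy hr
  · simp [hxy]
  · exact dist_eq_one_iff_adj.2 (starGraph_adj.2 ⟨hxy, hr⟩)
  · rw [not_or] at hr
    have hx : (starGraph r).Adj x r := starGraph_center_adj' (Ne.symm hr.1)
    have hy : (starGraph r).Adj r y := starGraph_center_adj (Ne.symm hr.2)
    refine le_antisymm ?_ ((connected_starGraph r).one_lt_dist_of_ne_of_not_adj hxy ?_)
    · simpa using dist_le (hx.toWalk.append hy.toWalk)
    · simp [hxy, hr]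

end SimpleGraph

theorem Set.Pairwise.fst_eq_or_snd_eq {α β : Type*} {s : Set (α × β)}
    (h : s.Pairwise fun u v => u.1 = v.1 ∨ u.2 = v.2) :
    (s.Pairwise fun u v => u.1 = v.1) ∨ s.Pairwise fun u v => u.2 = v.2 := by
  by_cases hrow : ∃ u ∈ s, ∃ v ∈ s, u ≠ v ∧ u.1 = v.1
  · obtain ⟨u, hu, v, hv, huv, hfst⟩ := hrow
    have hall : ∀ w ∈ s, w.1 = u.1 := by
      intro w hw
      by_contra hwu
      have hwv : w.1 ≠ v.1 := hfst ▸ hwu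
      have h₁ := (h hw hu (ne_of_apply_ne _ hwu)).resolve_left hwu
      have h₂ := (h hw hv (ne_of_apply_ne _ hwv)).resolve_left hwv
      exact huv (Prod.ext hfst (h₁.symm.trans h₂))
    exact Or.inl fun x hx y hy _ => (hall x hx).trans (hall y hy).symm
  · exact Or.inr fun x hx y hy hxy =>
      (h hx hy hxy).resolve_left fun e => hrow ⟨x, hx, y, hy, hxy, e⟩

theorem exists_ne_and_ne_of_three_le_natCard {α : Type*} (h : 3 ≤ Nat.card α) (a b : α) :
    ∃ c, c ≠ a ∧ c ≠ b := by
  by_contra! hab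
  have hsub : Set.univ ⊆ ({a, b} : Set α) := fun c _ => (em (c = a)).imp_right (hab c)
  have h₁ := Set.ncard_le_ncard hsub (Set.toFinite _)
  have h₂ := Set.ncard_insert_le a {b}
  rw [Set.ncard_univ, Set.ncard_singleton] at *
  omega

section GeneralPosition

variable {V : Type*} {G : SimpleGraph V} {S T U C D : Set V}

theorem isGPSet_iff_dist_add_dist (hG : G.Connected) :
    IsGPSet G S ↔
      ∀ u ∈ S, ∀ v ∈ S, ∀ w ∈ S, G.dist u w + G.dist w v = G.dist u v → w = u ∨ w = v := by
  classical
  constructor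
  · intro hS u hu v hv w hw hd
    obtain ⟨p, hp⟩ := hG.exists_walk_length_eq_dist u w
    obtain ⟨q, hq⟩ := hG.exists_walk_length_eq_dist w v
    have hlen : (p.append q).length = G.dist u v := by rw [Walk.length_append, hp, hq, hd]
    exact hS u hu v hv _ ((p.append q).isPath_of_length_eq_dist hlen) hlen w
      ((Walk.mem_support_append_iff _ _).2 (Or.inl p.end_mem_support)) hw
  · intro h u hu v hv p _ hp w hw hwS
    refine h u hu v hv w hwS (le_antisymm ?_ hG.dist_triangle)
    calc G.dist u w + G.dist w v ≤ (p.takeUntil w hw).length + (p.dropUntil w hw).length :=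
          add_le_add (dist_le _) (dist_le _)
      _ = G.dist u v := by rw [← Walk.length_append, p.take_spec hw, hp]

theorem IsGPSet.mono (hS : IsGPSet G S) (hTS : T ⊆ S) : IsGPSet G T :=
  fun u hu v hv p hp hlen w hw hwT => hS u (hTS hu) v (hTS hv) p hp hlen w hw (hTS hwT)

theorem LegalMove.ncard_eq [Finite V] (h : LegalMove G S T) : T.ncard = S.ncard := by
  obtain ⟨-, u, hu, v, hv, -, rfl, -⟩ := h
  rw [Set.ncard_insert_of_notMem (fun h => hv h.1), Set.ncard_sdiff_singleton_add_one hu]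

theorem LegalMove.symm (h : LegalMove G S T) : LegalMove G T S := by
  obtain ⟨hS, u, hu, v, hv, huv, rfl, hT⟩ := h
  refine ⟨hT, v, Set.mem_insert _ _, u, fun h => ?_, huv.symm, ?_, hS⟩
  · rcases h with rfl | h
    · exact hv hu
    · exact h.2 rfl
  · ext x
    simp only [Set.mem_insert_iff, Set.mem_sdiff, Set.mem_singleton_iff]
    grind

theorem IsMobileGPSet.exists_isGPSet_mem [Finite V] (hS : IsMobileGPSet G S) (x : V) :
    ∃ T, IsGPSet G T ∧ T.ncard = S.ncard ∧ x ∈ T := by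
  obtain ⟨hgp, n, f, rfl, hmove, hcover⟩ := hS
  have hf : ∀ i ≤ n, IsGPSet G (f i) ∧ (f i).ncard = (f 0).ncard := by
    intro i hi
    induction i with
    | zero => exact ⟨hgp, rfl⟩
    | succ i ih =>
      obtain ⟨-, -, -, -, -, -, -, hgp⟩ := hmove i (by omega)
      exact ⟨hgp, (hmove i (by omega)).ncard_eq.trans (ih (by omega)).2⟩
  obtain ⟨i, hi, hx⟩ := Set.mem_iUnion₂.1 (hcover ▸ Set.mem_univ x)
  exact ⟨f i, (hf i hi).1, (hf i hi).2, hx⟩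

theorem mob_eq_of_isMobileGPSet (hS : IsMobileGPSet G S)
    (hmax : ∀ T, IsMobileGPSet G T → T.ncard ≤ S.ncard) : mob G = S.ncard :=
  IsGreatest.csSup_eq ⟨⟨S, hS, rfl⟩, by rintro _ ⟨T, hT, rfl⟩; exact hmax T hT⟩

def MoveSeq (G : SimpleGraph V) (S T C : Set V) : Prop :=
  ∃ (n : ℕ) (f : ℕ → Set V), f 0 = S ∧ f n = T ∧ (∀ i < n, LegalMove G (f i) (f (i + 1))) ∧
    C ⊆ ⋃ i ∈ Set.Iic n, f i

namespace MoveSeq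

theorem refl (S : Set V) : MoveSeq G S S S :=
  ⟨0, fun _ => S, rfl, rfl, by simp,
    Set.subset_biUnion_of_mem (u := fun _ => S) (Set.mem_Iic.2 le_rfl)⟩

theorem mono (h : MoveSeq G S T C) (hDC : D ⊆ C) : MoveSeq G S T D :=
  let ⟨n, f, h0, hn, hmove, hC⟩ := h
  ⟨n, f, h0, hn, hmove, hDC.trans hC⟩

theorem single (h : LegalMove G S T) : MoveSeq G S T (S ∪ T) := by
  refine ⟨1, fun i => if i = 0 then S else T, rfl, rfl, by simpa using h, ?_⟩
  rintro x (hx | hx)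
  · exact Set.mem_biUnion (x := 0) (Set.mem_Iic.2 zero_le_one) (by simpa using hx)
  · exact Set.mem_biUnion (x := 1) (Set.mem_Iic.2 le_rfl) (by simpa using hx)

theorem trans (h₁ : MoveSeq G S T C) (h₂ : MoveSeq G T U D) : MoveSeq G S U (C ∪ D) := by
  obtain ⟨n, f, hf0, hfn, hfmove, hC⟩ := h₁
  obtain ⟨m, g, hg0, hgm, hgmove, hD⟩ := h₂
  set h : ℕ → Set V := fun i => if i ≤ n then f i else g (i - n)
  have hlow : ∀ i ≤ n, h i = f i := fun i hi => if_pos hi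
  have hhigh : ∀ i, h (n + i) = g i := by
    intro i
    rcases Nat.eq_zero_or_pos i with rfl | hi
    · simp [h, hfn, hg0]
    · simp only [h, if_neg (show ¬n + i ≤ n by omega), Nat.add_sub_cancel_left]
  refine ⟨n + m, h, by simp [h, hf0], by rw [hhigh, hgm], fun i hi => ?_, ?_⟩
  · rcases lt_or_ge i n with hin | hin
    · rw [hlow i hin.le, hlow (i + 1) hin]
      exact hfmove i hin
    · obtain ⟨j, rfl⟩ := Nat.exists_eq_add_of_le hin
      rw [hhigh, add_assoc, hhigh]
      exact hgmove j (by omega)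
  · refine Set.union_subset (hC.trans ?_) (hD.trans ?_) <;>
      refine Set.iUnion₂_subset fun i hi => ?_
    · rw [← hlow i hi]
      exact Set.subset_biUnion_of_mem (u := h) (Set.mem_Iic.2 (by grind))
    · rw [← hhigh]
      exact Set.subset_biUnion_of_mem (u := h) (Set.mem_Iic.2 (by grind))

theorem symm (h : MoveSeq G S T C) : MoveSeq G T S C := by
  obtain ⟨n, f, hf0, hfn, hfmove, hC⟩ := h
  refine ⟨n, fun i => f (n - i), by simpa using hfn, by simpa using hf0, fun i hi => ?_, ?_⟩
  · have h := (hfmove (n - (i + 1)) (by omega)).symm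
    rwa [show n - (i + 1) + 1 = n - i by omega] at h
  · refine hC.trans (Set.iUnion₂_subset fun i hi => ?_)
    have hsub :=
      Set.subset_biUnion_of_mem (u := fun i => f (n - i)) (Set.mem_Iic.2 (Nat.sub_le n i))
    rwa [Nat.sub_sub_self (Set.mem_Iic.1 hi)] at hsub

theorem loop_of_forall_mem {s : Set V} (hs : s.Finite) (h : ∀ x ∈ s, MoveSeq G S S {x}) :
    MoveSeq G S S s := by
  refine Set.Finite.induction_on_subset (motive := fun t _ => MoveSeq G S S t) s hs
    ((refl S).mono (Set.empty_subset S)) fun {a t} ha _ _ ih => ?_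
  exact ((h a ha).trans ih).mono (Set.insert_eq a t).subset

theorem isMobileGPSet (hS : IsGPSet G S) (h : MoveSeq G S T Set.univ) : IsMobileGPSet G S :=
  let ⟨n, f, h0, _, hmove, hC⟩ := h
  ⟨hS, n, f, h0, hmove, Set.univ_subset_iff.1 hC⟩

end MoveSeq

end GeneralPosition

section Star

variable {V : Type*} {r i j j' m : V}

def StarWbtw (r x y z : V) : Prop := y = x ∨ y = z ∨ (y = r ∧ x ≠ z)

theorem starGraph_dist_add_dist_eq_iff {x y z : V} :
    (starGraph r).dist x y + (starGraph r).dist y z = (starGraph r).dist x z ↔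
      StarWbtw r x y z := by
  classical
  simp only [starGraph_dist, StarWbtw]
  split_ifs <;> grind

theorem isGPSet_starGraph_iff {A : Set V} :
    IsGPSet (starGraph r) A ↔
      ∀ x ∈ A, ∀ y ∈ A, ∀ w ∈ A, StarWbtw r x w y → w = x ∨ w = y := by
  simp only [isGPSet_iff_dist_add_dist (connected_starGraph r), starGraph_dist_add_dist_eq_iff]

theorem isGPSet_starGraph_boxProd_iff {S : Set (V × V)} :
    IsGPSet (starGraph r □ starGraph r) S ↔
      ∀ u ∈ S, ∀ v ∈ S, ∀ w ∈ S, StarWbtw r u.1 w.1 v.1 → StarWbtw r u.2 w.2 v.2 →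
        w = u ∨ w = v := by
  simp only [isGPSet_iff_dist_add_dist ((connected_starGraph r).boxProd (connected_starGraph r)),
    dist_add_dist_boxProd_eq_iff (connected_starGraph r) (connected_starGraph r),
    starGraph_dist_add_dist_eq_iff, and_imp]

theorem IsGPSet.ncard_add_one_le_of_starGraph [Finite V] (hV : 3 ≤ Nat.card V) {A : Set V}
    (hA : IsGPSet (starGraph r) A) : A.ncard + 1 ≤ Nat.card V := by
  by_cases hr : r ∈ A
  · have hsub : (A \ {r}).Subsingleton := by
      intro x ⟨hx, hxr⟩ y ⟨hy, hyr⟩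
      by_contra hxy
      have := isGPSet_starGraph_iff.1 hA x hx y hy r hr (Or.inr (Or.inr ⟨rfl, hxy⟩))
      grind
    have := Set.ncard_sdiff_singleton_add_one hr
    have := Set.ncard_le_one_iff_subsingleton.2 hsub
    omega
  · calc A.ncard + 1 ≤ ({r}ᶜ : Set V).ncard + ({r} : Set V).ncard := by
          rw [Set.ncard_singleton]
          exact Nat.add_le_add_right (Set.ncard_le_ncard fun x hx => by grind) 1
      _ = Nat.card V := Set.ncard_compl_add_ncard _

theorem IsGPSet.image_swap {S : Set (V × V)} (hS : IsGPSet (starGraph r □ starGraph r) S) :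
    IsGPSet (starGraph r □ starGraph r) (Prod.swap '' S) := by
  rw [isGPSet_starGraph_boxProd_iff] at hS ⊢
  rintro _ ⟨u, hu, rfl⟩ _ ⟨v, hv, rfl⟩ _ ⟨w, hw, rfl⟩ h₁ h₂
  simpa using hS u hu v hv w hw h₂ h₁

theorem IsGPSet.ncard_add_one_le_of_pairwise_fst_eq [Finite V] (hV : 3 ≤ Nat.card V)
    {S : Set (V × V)} (hS : IsGPSet (starGraph r □ starGraph r) S)
    (hrow : S.Pairwise fun u v => u.1 = v.1) : S.ncard + 1 ≤ Nat.card V := by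
  have hinj : S.InjOn Prod.snd := fun u hu v hv h => by
    by_contra huv
    exact huv (Prod.ext (hrow hu hv huv) h)
  have hgp : IsGPSet (starGraph r) (Prod.snd '' S) := by
    rw [isGPSet_starGraph_iff]
    rintro _ ⟨u, hu, rfl⟩ _ ⟨v, hv, rfl⟩ _ ⟨w, hw, rfl⟩ hb
    have hwu : w.1 = u.1 := by
      rcases eq_or_ne w u with rfl | h
      · rfl
      · exact hrow hw hu h
    rcases isGPSet_starGraph_boxProd_iff.1 hS u hu v hv w hw (Or.inl hwu) hb with rfl | rfl
    · exact Or.inl rfl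
    · exact Or.inr rfl
  rw [← hinj.ncard_image]
  exact hgp.ncard_add_one_le_of_starGraph hV

theorem IsGPSet.fst_eq_or_snd_eq_of_center_mem {T : Set (V × V)}
    (hT : IsGPSet (starGraph r □ starGraph r) T) (hc : (r, r) ∈ T) {u v : V × V}
    (hu : u ∈ T) (hv : v ∈ T) (hur : u ≠ (r, r)) (hvr : v ≠ (r, r)) : u.1 = v.1 ∨ u.2 = v.2 := by
  by_contra! h
  rcases isGPSet_starGraph_boxProd_iff.1 hT u hu v hv (r, r) hc (Or.inr (Or.inr ⟨rfl, h.1⟩))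
    (Or.inr (Or.inr ⟨rfl, h.2⟩)) with h' | h'
  · exact hur h'.symm
  · exact hvr h'.symm

theorem IsGPSet.ncard_le_of_center_mem [Finite V] (hV : 3 ≤ Nat.card V) {T : Set (V × V)}
    (hT : IsGPSet (starGraph r □ starGraph r) T) (hc : (r, r) ∈ T) : T.ncard ≤ Nat.card V := by
  set T' := T \ {(r, r)}
  have hT' : IsGPSet (starGraph r □ starGraph r) T' := hT.mono Set.sdiff_subset
  have hline : T'.Pairwise fun u v => u.1 = v.1 ∨ u.2 = v.2 :=
    fun u hu v hv _ => hT.fst_eq_or_snd_eq_of_center_mem hc hu.1 hv.1 hu.2 hv.2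
  have hT'card : T'.ncard + 1 ≤ Nat.card V := by
    rcases hline.fst_eq_or_snd_eq with hrow | hcol
    · exact hT'.ncard_add_one_le_of_pairwise_fst_eq hV hrow
    · rw [← Set.ncard_image_of_injective T' Prod.swap_injective]
      refine hT'.image_swap.ncard_add_one_le_of_pairwise_fst_eq hV ?_
      rintro _ ⟨u, hu, rfl⟩ _ ⟨v, hv, rfl⟩ huv
      exact hcol hu hv fun h => huv (h ▸ rfl)
  rw [← Set.ncard_sdiff_singleton_add_one hc]
  exact hT'card

def hubConf (r j : V) : Set (V × V) := {p | (p.1 = r ∧ p.2 = j) ∨ (p.1 ≠ r ∧ p.2 = r)}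

def sweepConf (r j m : V) (s : Set V) : Set (V × V) :=
  {p | (p.1 = r ∧ p.2 = j) ∨ (p.1 ≠ r ∧ ((p.1 ∈ s ∧ p.2 = m) ∨ (p.1 ∉ s ∧ p.2 = r)))}

def pairConf (r j j' i : V) : Set (V × V) :=
  {p | (p.1 = r ∧ (p.2 = j ∨ p.2 = j')) ∨ (p.1 ≠ r ∧ p.1 ≠ i ∧ p.2 = r)}

def gatherConf (r m : V) : Set (V × V) := {p | p = (r, r) ∨ (p.1 ≠ r ∧ p.2 = m)}

theorem sweepConf_empty : sweepConf r j m ∅ = hubConf r j := by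
  ext p
  simp [sweepConf, hubConf]

theorem pairConf_comm : pairConf r j j' i = pairConf r j' j i := by
  ext p
  simp only [pairConf, Set.mem_ofPred_eq]
  tauto

theorem ncard_hubConf [Finite V] (hj : j ≠ r) : (hubConf r j).ncard = Nat.card V := by
  classical
  have hrange : hubConf r j = Set.range fun x => if x = r then (r, j) else (x, r) := by
    ext ⟨a, b⟩
    simp only [hubConf, Set.mem_ofPred_eq, Set.mem_range]
    constructor
    · rintro (⟨rfl, rfl⟩ | ⟨ha, rfl⟩)
      · exact ⟨a, by simp⟩
      · exact ⟨a, by simp [ha]⟩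
    · rintro ⟨x, hx⟩
      split_ifs at hx <;> grind
  rw [hrange, Set.ncard_range_of_injective fun x y hxy => by
    split_ifs at hxy <;> grind]

theorem isGPSet_sweepConf (hj : j ≠ r) (hmj : m ≠ j) (s : Set V) :
    IsGPSet (starGraph r □ starGraph r) (sweepConf r j m s) := by
  rw [isGPSet_starGraph_boxProd_iff]
  rintro ⟨a, b⟩ hu ⟨c, d⟩ hv ⟨e, f⟩ hw h₁ h₂
  simp only [sweepConf, StarWbtw, Set.mem_ofPred_eq, Prod.mk.injEq] at *
  grind

theorem isGPSet_hubConf (hj : j ≠ r) : IsGPSet (starGraph r □ starGraph r) (hubConf r j) :=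
  sweepConf_empty (m := r) ▸ isGPSet_sweepConf hj hj.symm ∅

theorem isGPSet_pairConf (hj : j ≠ r) (hj' : j' ≠ r) :
    IsGPSet (starGraph r □ starGraph r) (pairConf r j j' i) := by
  rw [isGPSet_starGraph_boxProd_iff]
  rintro ⟨a, b⟩ hu ⟨c, d⟩ hv ⟨e, f⟩ hw h₁ h₂
  simp only [pairConf, StarWbtw, Set.mem_ofPred_eq, Prod.mk.injEq] at *
  grind

theorem isGPSet_gatherConf (hm : m ≠ r) :
    IsGPSet (starGraph r □ starGraph r) (gatherConf r m) := by
  rw [isGPSet_starGraph_boxProd_iff]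
  rintro ⟨a, b⟩ hu ⟨c, d⟩ hv ⟨e, f⟩ hw h₁ h₂
  simp only [gatherConf, StarWbtw, Set.mem_ofPred_eq, Prod.mk.injEq] at *
  grind

theorem legalMove_sweepConf_insert (hj : j ≠ r) (hm : m ≠ r) (hmj : m ≠ j) {s : Set V}
    (hi : i ≠ r) (his : i ∉ s) :
    LegalMove (starGraph r □ starGraph r) (sweepConf r j m s) (sweepConf r j m (insert i s)) := by
  refine ⟨isGPSet_sweepConf hj hmj s, (i, r), by simp [sweepConf, hi, his], (i, m),
    by simp [sweepConf, hi, his, hm], boxProd_adj.2 (Or.inr ⟨starGraph_center_adj hm.symm, rfl⟩),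
    ?_, isGPSet_sweepConf hj hmj _⟩
  ext ⟨a, b⟩
  simp only [sweepConf, Set.mem_ofPred_eq, Set.mem_insert_iff, Set.mem_sdiff,
    Set.mem_singleton_iff, Prod.mk.injEq]
  grind

theorem legalMove_sweepConf_pairConf (hj : j ≠ r) (hj' : j' ≠ r) (hjj' : j ≠ j') (hi : i ≠ r) :
    LegalMove (starGraph r □ starGraph r) (sweepConf r j j' {i}) (pairConf r j j' i) := by
  refine ⟨isGPSet_sweepConf hj hjj'.symm {i}, (i, j'), by simp [sweepConf, hi], (r, j'),
    by simp [sweepConf, hjj'.symm], boxProd_adj.2 (Or.inl ⟨starGraph_center_adj' hi.symm, rfl⟩),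
    ?_, isGPSet_pairConf hj hj'⟩
  ext ⟨a, b⟩
  simp only [sweepConf, pairConf, Set.mem_ofPred_eq, Set.mem_insert_iff, Set.mem_sdiff,
    Set.mem_singleton_iff, Prod.mk.injEq]
  grind

theorem legalMove_sweepConf_gatherConf (hj : j ≠ r) (hm : m ≠ r) (hmj : m ≠ j) :
    LegalMove (starGraph r □ starGraph r) (sweepConf r j m {x | x ≠ r}) (gatherConf r m) := by
  refine ⟨isGPSet_sweepConf hj hmj _, (r, j), by simp [sweepConf], (r, r),
    by simp [sweepConf, hj.symm, hm.symm],
    boxProd_adj.2 (Or.inr ⟨starGraph_center_adj' hj.symm, rfl⟩),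
    ?_, isGPSet_gatherConf hm⟩
  ext ⟨a, b⟩
  simp only [sweepConf, gatherConf, Set.mem_ofPred_eq, Set.mem_insert_iff, Set.mem_sdiff,
    Set.mem_singleton_iff, Prod.mk.injEq]
  grind

theorem moveSeq_hubConf_sweepConf [Finite V] (hj : j ≠ r) (hm : m ≠ r) (hmj : m ≠ j) :
    MoveSeq (starGraph r □ starGraph r) (hubConf r j) (sweepConf r j m {x | x ≠ r}) ∅ := by
  refine Set.Finite.induction_on_subset
    (motive := fun t _ => MoveSeq (starGraph r □ starGraph r) (hubConf r j) (sweepConf r j m t) ∅)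
    _ (Set.toFinite _) ?_ fun {i t} hi _ hit ih => ?_
  · rw [sweepConf_empty]
    exact (MoveSeq.refl _).mono (Set.empty_subset _)
  · exact (ih.trans (MoveSeq.single (legalMove_sweepConf_insert hj hm hmj hi hit))).mono
      (Set.empty_subset _)

theorem moveSeq_hubConf_hubConf [Finite V] (hV : 3 ≤ Nat.card V) (hj : j ≠ r) (hj' : j' ≠ r) :
    MoveSeq (starGraph r □ starGraph r) (hubConf r j) (hubConf r j') (hubConf r j') := by
  rcases eq_or_ne j j' with rfl | hjj'
  · exact MoveSeq.refl _
  obtain ⟨i, hi, -⟩ := exists_ne_and_ne_of_three_le_natCard hV r r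
  have h₁ := legalMove_sweepConf_insert hj hj' hjj'.symm hi (Set.notMem_empty i)
  have h₂ := legalMove_sweepConf_pairConf hj hj' hjj' hi
  have h₃ := legalMove_sweepConf_pairConf hj' hj hjj'.symm hi
  have h₄ := legalMove_sweepConf_insert hj' hj hjj' hi (Set.notMem_empty i)
  rw [sweepConf_empty, insert_empty_eq] at h₁ h₄
  rw [pairConf_comm] at h₃
  exact ((((MoveSeq.single h₁).trans (MoveSeq.single h₂)).trans (MoveSeq.single h₃).symm).trans
    (MoveSeq.single h₄).symm).mono (Set.subset_union_left.trans Set.subset_union_right)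

theorem exists_moveSeq_hubConf_visiting [Finite V] (hV : 3 ≤ Nat.card V) {p : V × V}
    (hp : p ≠ (r, r)) :
    ∃ j, j ≠ r ∧ MoveSeq (starGraph r □ starGraph r) (hubConf r j) (hubConf r j) {p} := by
  obtain ⟨a, b⟩ := p
  by_cases ha : a = r
  · exact ⟨b, fun hb => hp (by rw [ha, hb]), (MoveSeq.refl _).mono (by simp [hubConf, ha])⟩
  by_cases hb : b = r
  · obtain ⟨j, hj, -⟩ := exists_ne_and_ne_of_three_le_natCard hV r r
    exact ⟨j, hj, (MoveSeq.refl _).mono (by simp [hubConf, ha, hb])⟩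
  obtain ⟨j, hj, hbj⟩ := exists_ne_and_ne_of_three_le_natCard hV r b
  have h := legalMove_sweepConf_insert hj hb (Ne.symm hbj) ha (Set.notMem_empty a)
  rw [sweepConf_empty, insert_empty_eq] at h
  exact ⟨j, hj, ((MoveSeq.single h).trans (MoveSeq.single h).symm).mono
    (by simp [sweepConf, ha])⟩

theorem isMobileGPSet_hubConf [Finite V] (hV : 3 ≤ Nat.card V) (hj : j ≠ r) :
    IsMobileGPSet (starGraph r □ starGraph r) (hubConf r j) := by
  have hloops : MoveSeq (starGraph r □ starGraph r) (hubConf r j) (hubConf r j)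
      {p | p ≠ (r, r)} := by
    refine MoveSeq.loop_of_forall_mem (Set.toFinite _) fun p hp => ?_
    obtain ⟨j', hj', h⟩ := exists_moveSeq_hubConf_visiting hV hp
    have hjj' := moveSeq_hubConf_hubConf hV hj hj'
    exact ((hjj'.trans h).trans hjj'.symm).mono (by simp)
  obtain ⟨m, hm, hmj⟩ := exists_ne_and_ne_of_three_le_natCard hV r j
  refine MoveSeq.isMobileGPSet (isGPSet_hubConf hj) (((hloops.trans
    (moveSeq_hubConf_sweepConf hj hm hmj)).trans
    (MoveSeq.single (legalMove_sweepConf_gatherConf hj hm hmj))).mono fun p _ => ?_)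
  by_cases hp : p = (r, r)
  · exact Or.inr (Or.inr (Or.inl hp))
  · exact Or.inl (Or.inl hp)

theorem mob_starGraph_boxProd_starGraph [Finite V] (hV : 3 ≤ Nat.card V) (r : V) :
    mob (starGraph r □ starGraph r) = Nat.card V := by
  obtain ⟨j, hj, -⟩ := exists_ne_and_ne_of_three_le_natCard hV r r
  rw [← ncard_hubConf hj]
  refine mob_eq_of_isMobileGPSet (isMobileGPSet_hubConf hV hj) fun T hT => ?_
  obtain ⟨T', hT', hcard, hc⟩ := hT.exists_isGPSet_mem (r, r)
  rw [ncard_hubConf hj, ← hcard]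
  exact hT'.ncard_le_of_center_mem hV hc

end Star

theorem mob_star_boxProd_star (k : ℕ) (hk : 2 ≤ k) :
    mob (_root_.starGraph k □ _root_.starGraph k) = k + 1 := by
  have h := mob_starGraph_boxProd_starGraph (V := Fin (k + 1)) (by simpa) 0
  rwa [Nat.card_fin] at h
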